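/- Let h ≥ 1, let X ⊆ B^h be nonempty, let G = Q_h(X), let u ∈ V(G) have degree h in G, and let β be an isometric embedding of G into Q_h such that β(u) = 0^h and β(z) = z ⊕ u for every neighbor z of u. Then β(w) = w ⊕ u for every w ∈ V(G). Consequently β maps V(G^u) bijectively onto V(G^u), the restriction of β to V(G^u) is a proper embedding of G^u with β(u) = 0^h, and the set {y ∈ V(G^u) : β(y) ∈ X'} of maximal vertices of G^u with respect to u equals {x ⊕ u : x ∈ X'}, where X' = {x ∈ \widehat X : u ≤ x}. -/

import Mathlib

open SimpleGraph

/-- The hypercube `Q_h` on binary words of length `h`: two words are adjacent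
iff their Hamming distance is `1`. -/
def Qcube (h : ℕ) : SimpleGraph (Fin h → Bool) where
  Adj u v := hammingDist u v = 1
  symm := ⟨fun (u v : Fin h → Bool) (huv : hammingDist u v = 1) => show hammingDist v u = 1 by rwa [hammingDist_comm]⟩
  loopless := ⟨fun (u : Fin h → Bool) (hu : hammingDist u u = 1) => by rw [hammingDist_self] at hu; exact absurd hu (by norm_num)⟩

/-- Vertex set of the daisy cube `Q_h(X)`: all words below some element of `X`. -/
def daisyVerts {h : ℕ} (X : Set (Fin h → Bool)) : Set (Fin h → Bool) :=
  {v | ∃ x ∈ X, v ≤ x}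

/-- The daisy cube `Q_h(X)`, the subgraph of `Q_h` induced by `daisyVerts X`. -/
def daisyGraph {h : ℕ} (X : Set (Fin h → Bool)) : SimpleGraph (daisyVerts X) :=
  SimpleGraph.induce (daisyVerts X) (Qcube h)

/-- `\widehat X`: the set of maximal elements of the poset `(X, ≤)`. -/
def maxSet {h : ℕ} (X : Set (Fin h → Bool)) : Set (Fin h → Bool) :=
  {x ∈ X | ∀ y ∈ X, x ≤ y → x = y}

/-- The all-zeros word `0^h`. -/
def zeroW (h : ℕ) : Fin h → Bool := fun _ => false

/-- Bitwise XOR of words. -/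
def xorW {h : ℕ} (u v : Fin h → Bool) : Fin h → Bool := fun i => xor (u i) (v i)

/-- Bitwise AND of words. -/
def andW {h : ℕ} (u v : Fin h → Bool) : Fin h → Bool := fun i => u i && v i

/-- The weight `w(u)`: the number of ones of a word. -/
def weightW {h : ℕ} (u : Fin h → Bool) : ℕ :=
  (Finset.univ.filter fun i => u i = true).card

/-- The interval `I_G(u,v)`: vertices lying on shortest `u,v`-paths. -/
def gInterval {V : Type*} (G : SimpleGraph V) (u v : V) : Set V :=
  {w | G.dist u w + G.dist w v = G.dist u v}

/-- `N^u(v)`: neighbors of `v` that are closer to `u` than `v` is. -/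
def lowerNbrs {V : Type*} (G : SimpleGraph V) (u v : V) : Set V :=
  {z | G.Adj v z ∧ G.dist u z + 1 = G.dist u v}

/-- `α` is an isometric embedding of `G` into `Q_h`. -/
def IsIsomEmb {V : Type*} (G : SimpleGraph V) {h : ℕ} (α : V → Fin h → Bool) : Prop :=
  ∀ a b, hammingDist (α a) (α b) = G.dist a b

/-- `α` is a proper embedding of `G` into `Q_h`: an isometric embedding such that
`G` is isomorphic to the daisy cube generated by the image of `α`. -/
def IsProperEmb {V : Type*} (G : SimpleGraph V) {h : ℕ} (α : V → Fin h → Bool) : Prop :=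
  IsIsomEmb G α ∧ Nonempty (G ≃g daisyGraph (Set.range α))

/-- `v` is a minimal vertex of `G`: some proper embedding sends `v` to `0^h`. -/
def IsMinVertex {V : Type*} (G : SimpleGraph V) (h : ℕ) (v : V) : Prop :=
  ∃ α : V → Fin h → Bool, IsProperEmb G α ∧ α v = zeroW h

/-- The labeling conditions of Proposition `cubes`/Lemma `partial`: `α v = 0^h`,
the neighbors of `v` get pairwise distinct weight-one labels, and every other
vertex gets the bitwise OR of the labels of its down-neighbors. -/
def goodLabeling {V : Type*} (G : SimpleGraph V) {h : ℕ} (v : V)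
    (α : V → Fin h → Bool) : Prop :=
  α v = zeroW h ∧
  Set.InjOn α (G.neighborSet v) ∧
  (∀ z ∈ G.neighborSet v, weightW (α z) = 1) ∧
  (∀ u ∉ insert v (G.neighborSet v),
    ∀ i, α u i = true ↔ ∃ z ∈ lowerNbrs G v u, α z i = true)


-- ===== auxiliary lemmas =====

def flipW {h : ℕ} (u : Fin h → Bool) (i : Fin h) : Fin h → Bool :=
  Function.update u i (!(u i))

lemma hammingDist_def' {h : ℕ} (a b : Fin h → Bool) :
    hammingDist a b = (Finset.univ.filter fun j => a j ≠ b j).card := rfl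

lemma filter_flip {h : ℕ} (a u : Fin h → Bool) (i : Fin h) :
    (Finset.univ.filter fun j => a j ≠ flipW u i j)
    = if a i = u i then insert i (Finset.univ.filter fun j => a j ≠ u j)
      else (Finset.univ.filter fun j => a j ≠ u j).erase i := by
  ext j
  by_cases hj : j = i
  · subst hj
    by_cases hai : a j = u j <;>
      simp only [Finset.mem_filter, Finset.mem_univ, true_and] <;> simp [flipW, hai, Bool.eq_not_iff]
  · have : flipW u i j = u j := Function.update_of_ne hj _ _
    by_cases hai : a i = u i <;> simp [hai, this, hj]

lemma hamming_flip_ne {h : ℕ} {a u : Fin h → Bool} {i : Fin h} (hi : a i ≠ u i) :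
    hammingDist a (flipW u i) + 1 = hammingDist a u := by
  rw [hammingDist_def', hammingDist_def', filter_flip, if_neg hi]
  rw [Finset.card_erase_of_mem (by simp [hi])]
  have : 0 < (Finset.univ.filter fun j => a j ≠ u j).card :=
    Finset.card_pos.mpr ⟨i, by simp [hi]⟩
  omega

lemma hamming_flip_eq {h : ℕ} {a u : Fin h → Bool} {i : Fin h} (hi : a i = u i) :
    hammingDist a (flipW u i) = hammingDist a u + 1 := by
  rw [hammingDist_def', hammingDist_def', filter_flip, if_pos hi]
  rw [Finset.card_insert_of_notMem (by simp [hi])]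

lemma hamming_self_flip {h : ℕ} (u : Fin h → Bool) (i : Fin h) :
    hammingDist u (flipW u i) = 1 := by
  have := hamming_flip_eq (a := u) (u := u) (i := i) rfl
  simpa using this

lemma eq_flip_of_hamming_one {h : ℕ} {u v : Fin h → Bool}
    (huv : hammingDist u v = 1) : ∃ i, v = flipW u i := by
  rw [hammingDist_def', Finset.card_eq_one] at huv
  obtain ⟨i, hi⟩ := huv
  refine ⟨i, funext fun j => ?_⟩
  by_cases hj : j = i
  · subst hj
    have : u j ≠ v j := by
      have : j ∈ Finset.univ.filter fun k => u k ≠ v k := by rw [hi]; simp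
      simpa using this
    simp only [flipW, Function.update_self]
    cases hb : u j <;> cases hc : v j <;> simp_all
  · have : u j = v j := by
      by_contra hne
      have : j ∈ ({i} : Finset (Fin h)) := by rw [← hi]; simp [hne]
      simp at this; exact hj this
    simp [flipW, Function.update_of_ne hj, this]

lemma flipW_injective {h : ℕ} (u : Fin h → Bool) : Function.Injective (flipW u) := by
  intro i j hij
  by_contra hne
  have h1 : flipW u i i = !(u i) := Function.update_self _ _ _
  have h2 : flipW u j i = u i := Function.update_of_ne hne _ _
  rw [hij, h2] at h1
  exact (Bool.not_ne_self _ h1.symm).elim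

lemma hamming_le_walk_length {h : ℕ} {S : Set (Fin h → Bool)} {a b : ↥S}
    (p : (SimpleGraph.induce S (Qcube h)).Walk a b) :
    hammingDist (a : Fin h → Bool) (b : Fin h → Bool) ≤ p.length := by
  induction p with
  | nil => simp
  | @cons x y z hadj p ih =>
    have h1 : hammingDist (x : Fin h → Bool) (y : Fin h → Bool) = 1 := hadj
    calc hammingDist (x : Fin h → Bool) (z : Fin h → Bool)
        ≤ hammingDist (x : Fin h → Bool) (y : Fin h → Bool)
          + hammingDist (y : Fin h → Bool) (z : Fin h → Bool) := hammingDist_triangle _ _ _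
      _ ≤ 1 + p.length := by rw [h1]; omega
      _ = (SimpleGraph.Walk.cons hadj p).length := by simp [SimpleGraph.Walk.length_cons]; omega

lemma lowerSet_walk {h : ℕ} {S : Set (Fin h → Bool)}
    (hS : ∀ ⦃a b : Fin h → Bool⦄, a ∈ S → b ≤ a → b ∈ S) :
    ∀ (n : ℕ) (a b : Fin h → Bool) (ha : a ∈ S) (hb : b ∈ S), hammingDist a b = n →
      ∃ p : (SimpleGraph.induce S (Qcube h)).Walk ⟨a, ha⟩ ⟨b, hb⟩, p.length = n := by
  intro n
  induction n with
  | zero =>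
    intro a b ha hb h0
    have hab : a = b := by rwa [hammingDist_eq_zero] at h0
    subst hab
    exact ⟨.nil, rfl⟩
  | succ n ih =>
    intro a b ha hb hd
    have hne : a ≠ b := by
      intro hab; subst hab; simp [hammingDist_self] at hd
    have hstep : ∃ i, a i ≠ b i ∧ flipW a i ∈ S := by
      by_cases hcase : ∃ i, a i = true ∧ b i = false
      · obtain ⟨i, hai, hbi⟩ := hcase
        refine ⟨i, by simp [hai, hbi], hS ha ?_⟩
        intro j
        by_cases hj : j = i
        · subst hj; simp [flipW, hai]
        · simp [flipW, Function.update_of_ne hj]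
      · push_neg at hcase
        have hab : ∃ i, a i ≠ b i := Function.ne_iff.mp hne
        obtain ⟨i, hi⟩ := hab
        have hai : a i = false := by
          cases hcax : a i
          · rfl
          · exact absurd (hcase i hcax) (by cases hbx : b i <;> simp_all)
        refine ⟨i, hi, hS hb ?_⟩
        intro j
        by_cases hj : j = i
        · subst hj; simp [flipW, hai]
          cases hbx : b j <;> simp_all
        · simp [flipW, Function.update_of_ne hj]
          cases haj : a j
          · simp
          · have := hcase j haj
            cases hbj : b j <;> simp_all
    obtain ⟨i, hi, hmem⟩ := hstep
    have hd' : hammingDist (flipW a i) b = n := by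
      have := hamming_flip_ne (a := b) (u := a) (i := i) (Ne.symm hi)
      rw [hammingDist_comm b a] at this
      rw [hammingDist_comm]
      omega
    obtain ⟨p, hp⟩ := ih (flipW a i) b hmem hb hd'
    have hadj : (SimpleGraph.induce S (Qcube h)).Adj ⟨a, ha⟩ ⟨flipW a i, hmem⟩ :=
      hamming_self_flip a i
    exact ⟨.cons hadj p, by simp [hp]⟩

lemma lowerSet_dist {h : ℕ} {S : Set (Fin h → Bool)}
    (hS : ∀ ⦃a b : Fin h → Bool⦄, a ∈ S → b ≤ a → b ∈ S) (a b : ↥S) :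
    (SimpleGraph.induce S (Qcube h)).dist a b
      = hammingDist (a : Fin h → Bool) (b : Fin h → Bool) := by
  obtain ⟨p, hp⟩ := lowerSet_walk hS _ (a : Fin h → Bool) (b : Fin h → Bool) a.2 b.2 rfl
  have h1 : (SimpleGraph.induce S (Qcube h)).dist a b
      ≤ hammingDist (a : Fin h → Bool) (b : Fin h → Bool) := by
    have := SimpleGraph.dist_le p
    simpa [hp] using this
  have hr : (SimpleGraph.induce S (Qcube h)).Reachable a b := by
    have := p.reachable
    simpa using this
  obtain ⟨q, hq⟩ := hr.exists_walk_length_eq_dist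
  have h2 := hamming_le_walk_length q
  omega

lemma xorW_xorW {h : ℕ} (a b : Fin h → Bool) : xorW (xorW a b) b = a := by
  funext i; simp [xorW]

lemma xorW_self' {h : ℕ} (a : Fin h → Bool) : xorW a a = zeroW h := by
  funext i; simp [xorW, zeroW]

lemma xorW_le {h : ℕ} {a b x : Fin h → Bool} (ha : a ≤ x) (hb : b ≤ x) : xorW a b ≤ x := by
  intro i
  have h1 := ha i
  have h2 := hb i
  simp only [xorW]
  cases hx : a i <;> cases hy : b i <;> simp_all

lemma hammingDist_xorW {h : ℕ} (a b u : Fin h → Bool) :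
    hammingDist (xorW a u) (xorW b u) = hammingDist a b := by
  rw [hammingDist_def', hammingDist_def']
  congr 1
  ext j
  simp only [Finset.mem_filter, xorW]
  cases ha : a j <;> cases hb : b j <;> cases hu : u j <;> simp [ha, hb, hu]

lemma xorW_flip {h : ℕ} (u : Fin h → Bool) (i : Fin h) :
    xorW (flipW u i) u = flipW (zeroW h) i := by
  funext j
  by_cases hj : j = i
  · subst hj
    simp only [xorW, flipW, zeroW, Function.update_self]
    cases u j <;> simp
  · simp [xorW, flipW, zeroW, Function.update_of_ne hj]

lemma ncard_range_flip {h : ℕ} (u : Fin h → Bool) :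
    (Set.range (flipW u)).ncard = h := by
  rw [Set.ncard_eq_toFinset_card', Set.toFinset_range,
    Finset.card_image_of_injective _ (flipW_injective u), Finset.card_univ, Fintype.card_fin]


/-- Let `u` be a vertex of degree `h` of `G = Q_h(X)` and `β` an
isometric embedding with `β(u) = 0^h` and `β(z) = z ⊕ u` for all neighbors `z` of
`u`. Then `β(w) = w ⊕ u` for all vertices `w`; consequently `β` maps `V(G^u)`
bijectively onto `V(G^u)`, the restriction of `β` to `V(G^u)` is a proper embedding
of `G^u`, and `{y ∈ V(G^u) : β(y) ∈ X'} = {x ⊕ u : x ∈ X'}`. -/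
theorem stmt_14 (h : ℕ) (hh : 1 ≤ h) (X : Set (Fin h → Bool)) (hX : X.Nonempty)
    (u : daisyVerts X) (hu : ((daisyGraph X).neighborSet u).ncard = h)
    (β : daisyVerts X → Fin h → Bool) (hβ : IsIsomEmb (daisyGraph X) β)
    (hβu : β u = zeroW h)
    (hβn : ∀ z : daisyVerts X, (daisyGraph X).Adj u z →
      β z = xorW (z : Fin h → Bool) (u : Fin h → Bool)) :
    (∀ w : daisyVerts X, β w = xorW (w : Fin h → Bool) (u : Fin h → Bool)) ∧
    Set.BijOn β
      {w : daisyVerts X | ∃ x ∈ maxSet X,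
        (u : Fin h → Bool) ≤ x ∧ (w : Fin h → Bool) ≤ x}
      {w : Fin h → Bool | ∃ x ∈ maxSet X, (u : Fin h → Bool) ≤ x ∧ w ≤ x} ∧
    IsProperEmb
      (SimpleGraph.induce
        {w : Fin h → Bool | ∃ x ∈ maxSet X, (u : Fin h → Bool) ≤ x ∧ w ≤ x}
        (Qcube h))
      (fun w => xorW (w : Fin h → Bool) (u : Fin h → Bool)) ∧
    xorW (u : Fin h → Bool) (u : Fin h → Bool) = zeroW h ∧
    {y : daisyVerts X |
        (∃ x ∈ maxSet X, (u : Fin h → Bool) ≤ x ∧ (y : Fin h → Bool) ≤ x) ∧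
        β y ∈ maxSet X ∧ (u : Fin h → Bool) ≤ β y}
      = {y : daisyVerts X | ∃ x ∈ maxSet X, (u : Fin h → Bool) ≤ x ∧
          (y : Fin h → Bool) = xorW x (u : Fin h → Bool)} := by
  
  classical
  have hlow : ∀ ⦃a b : Fin h → Bool⦄, a ∈ daisyVerts X → b ≤ a → b ∈ daisyVerts X := by
    rintro a b ⟨x, hx, hax⟩ hba
    exact ⟨x, hx, le_trans hba hax⟩
  have hdist : ∀ a b : ↥(daisyVerts X), (daisyGraph X).dist a b
      = hammingDist (a : Fin h → Bool) (b : Fin h → Bool) :=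
    fun a b => lowerSet_dist hlow a b
  set U := (u : Fin h → Bool) with hUdef
  -- every flip of u is a vertex adjacent to u
  have hNsub : Subtype.val '' ((daisyGraph X).neighborSet u) ⊆ Set.range (flipW U) := by
    rintro _ ⟨z, hz, rfl⟩
    have hz1 : hammingDist U (z : Fin h → Bool) = 1 := hz
    obtain ⟨i, hi⟩ := eq_flip_of_hamming_one hz1
    exact ⟨i, hi.symm⟩
  have hNcard : (Subtype.val '' ((daisyGraph X).neighborSet u)).ncard = h := by
    rw [Set.ncard_image_of_injective _ Subtype.val_injective, hu]
  have hNeq : Subtype.val '' ((daisyGraph X).neighborSet u) = Set.range (flipW U) :=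
    Set.eq_of_subset_of_ncard_le hNsub
      (by rw [hNcard, ncard_range_flip U]) (Set.finite_range _)
  have hflipv : ∀ i, ∃ z : ↥(daisyVerts X),
      (daisyGraph X).Adj u z ∧ (z : Fin h → Bool) = flipW U i := by
    intro i
    have hmem : flipW U i ∈ Subtype.val '' ((daisyGraph X).neighborSet u) := by
      rw [hNeq]; exact ⟨i, rfl⟩
    obtain ⟨z, hz, hze⟩ := hmem
    exact ⟨z, hz, hze⟩
  -- the key bit computation
  have key : ∀ (w : ↥(daisyVerts X)) (i : Fin h),
      (β w i = true ↔ (w : Fin h → Bool) i ≠ U i) := by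
    intro w i
    have h0 : hammingDist (β w) (zeroW h) = hammingDist (w : Fin h → Bool) U := by
      have hwu := hβ w u
      rw [hβu] at hwu
      rw [hwu, hdist]
    obtain ⟨z, hadj, hze⟩ := hflipv i
    have hβz : β z = flipW (zeroW h) i := by
      rw [hβn z hadj, hze, xorW_flip]
    have h1 : hammingDist (β w) (flipW (zeroW h) i)
        = hammingDist (w : Fin h → Bool) (flipW U i) := by
      rw [← hβz, hβ w z, hdist, hze]
    by_cases hwi : (w : Fin h → Bool) i = U i
    · have h2 := hamming_flip_eq (a := (w : Fin h → Bool)) (u := U) (i := i) hwi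
      constructor
      · intro hb
        have h3 := hamming_flip_ne (a := β w) (u := zeroW h) (i := i)
          (by simp [hb, zeroW])
        omega
      · intro hne; exact (hne hwi).elim
    · have h2 := hamming_flip_ne (a := (w : Fin h → Bool)) (u := U) (i := i) hwi
      constructor
      · intro _; exact hwi
      · intro _
        by_contra hb
        have hbf : β w i = false := by
          cases hbb : β w i
          · rfl
          · exact (hb hbb).elim
        have h3 := hamming_flip_eq (a := β w) (u := zeroW h) (i := i)
          (by simp [hbf, zeroW])
        omega
  have hmain : ∀ w : ↥(daisyVerts X), β w = xorW (w : Fin h → Bool) U := by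
    intro w
    funext i
    have k := key w i
    simp only [xorW]
    cases hb : (w : Fin h → Bool) i <;> cases hc : U i <;>
      simp [hb, hc] at k ⊢ <;> simp [k]
  -- properties of the target set T
  have hTlow : ∀ ⦃a b : Fin h → Bool⦄,
      a ∈ {w : Fin h → Bool | ∃ x ∈ maxSet X, U ≤ x ∧ w ≤ x} → b ≤ a →
      b ∈ {w : Fin h → Bool | ∃ x ∈ maxSet X, U ≤ x ∧ w ≤ x} := by
    rintro a b ⟨x, hx, hux, hax⟩ hba
    exact ⟨x, hx, hux, le_trans hba hax⟩
  have hTxor : ∀ {t : Fin h → Bool}, t ∈ {w : Fin h → Bool | ∃ x ∈ maxSet X, U ≤ x ∧ w ≤ x} →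
      xorW t U ∈ {w : Fin h → Bool | ∃ x ∈ maxSet X, U ≤ x ∧ w ≤ x} := by
    rintro t ⟨x, hx, hux, htx⟩
    exact ⟨x, hx, hux, xorW_le htx hux⟩
  refine ⟨hmain, ⟨?_, ?_, ?_⟩, ⟨?_, ?_⟩, xorW_self' U, ?_⟩
  · -- MapsTo
    rintro w ⟨x, hx, hux, hwx⟩
    rw [hmain w]
    exact ⟨x, hx, hux, xorW_le hwx hux⟩
  · -- InjOn
    intro w hw w' hw' hee
    rw [hmain w, hmain w'] at hee
    have h2 := congrArg (fun t => xorW t U) hee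
    simp only [xorW_xorW] at h2
    exact Subtype.ext h2
  · -- SurjOn
    rintro t ⟨x, hx, hux, htx⟩
    have hwv : xorW t U ∈ daisyVerts X := ⟨x, hx.1, xorW_le htx hux⟩
    refine ⟨⟨xorW t U, hwv⟩, ⟨x, hx, hux, xorW_le htx hux⟩, ?_⟩
    rw [hmain]
    exact xorW_xorW t U
  · -- IsIsomEmb
    intro a b
    rw [hammingDist_xorW, lowerSet_dist hTlow a b]
  · -- the graph isomorphism
    have hsub1 : Set.range (fun w : ↥{w : Fin h → Bool | ∃ x ∈ maxSet X, U ≤ x ∧ w ≤ x} =>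
        xorW (w : Fin h → Bool) U) ⊆ {w : Fin h → Bool | ∃ x ∈ maxSet X, U ≤ x ∧ w ≤ x} := by
      rintro _ ⟨w, rfl⟩
      exact hTxor w.2
    have hDV : daisyVerts (Set.range
        (fun w : ↥{w : Fin h → Bool | ∃ x ∈ maxSet X, U ≤ x ∧ w ≤ x} =>
          xorW (w : Fin h → Bool) U))
        = {w : Fin h → Bool | ∃ x ∈ maxSet X, U ≤ x ∧ w ≤ x} := by
      apply Set.Subset.antisymm
      · rintro v ⟨r, hr, hvr⟩
        exact hTlow (hsub1 hr) hvr
      · intro t ht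
        exact ⟨t, ⟨⟨xorW t U, hTxor ht⟩, xorW_xorW t U⟩, le_refl t⟩
    refine ⟨⟨⟨fun w => ⟨xorW (w : Fin h → Bool) U, ?_⟩,
        fun v => ⟨xorW (v : Fin h → Bool) U, ?_⟩, ?_, ?_⟩, ?_⟩⟩
    · rw [hDV]; exact hTxor w.2
    · exact hTxor (hDV.subset v.2)
    · intro w
      exact Subtype.ext (xorW_xorW _ _)
    · intro v
      exact Subtype.ext (xorW_xorW _ _)
    · intro a b
      show hammingDist (xorW (a : Fin h → Bool) U) (xorW (b : Fin h → Bool) U) = 1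
        ↔ hammingDist (a : Fin h → Bool) (b : Fin h → Bool) = 1
      rw [hammingDist_xorW]
  · -- the maximal-vertex set equality
    ext y
    simp only [Set.mem_setOf_eq]
    constructor
    · rintro ⟨⟨x, hx, hux, hyx⟩, hβy, huβy⟩
      refine ⟨β y, hβy, huβy, ?_⟩
      rw [hmain y, xorW_xorW]
    · rintro ⟨x, hx, hux, hyx⟩
      have hβy : β y = x := by
        rw [hmain y, hyx, xorW_xorW]
      refine ⟨⟨x, hx, hux, ?_⟩, by rw [hβy]; exact hx, by rw [hβy]; exact hux⟩
      rw [hyx]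
      exact xorW_le (le_refl x) hux
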